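/- arXiv:1402.3157 — 5 statements merged into one kernel-verified Lean document; each statement's English description precedes it below -/
import Mathlib

section
/- Let R be an associative unital ring. A left R-module M is semi-Artinian if and only if for every left R-module F with zero socle, every R-linear map from M to F is the zero map. -/
universe u v w

/-- The socle of a module: the sum (supremum) of all simple submodules. -/
def moduleSocle (R : Type u) [Ring R] (M : Type v) [AddCommGroup M] [Module R M] :
    Submodule R M :=
  sSup {S : Submodule R M | IsSimpleModule R S}

/-- A submodule `N` of `M` is essential if `N ⊓ L ≠ ⊥` for every nonzero submodule `L` of `M`. -/
def IsEssentialSubmodule {R : Type u} [Ring R] {M : Type v} [AddCommGroup M] [Module R M]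
    (N : Submodule R M) : Prop :=
  ∀ L : Submodule R M, L ≠ ⊥ → N ⊓ L ≠ ⊥

/-- A module is semi-Artinian if every nonzero quotient has a nonzero socle. -/
def IsSemiartinianModule (R : Type u) [Ring R] (M : Type v) [AddCommGroup M] [Module R M] :
    Prop :=
  ∀ N : Submodule R M, N ≠ ⊤ → moduleSocle R (M ⧸ N) ≠ ⊥

/-- A module is singular if the annihilator of each of its elements is an essential left
ideal of `R`. -/
def IsSingularModule (R : Type u) [Ring R] (M : Type v) [AddCommGroup M] [Module R M] : Prop :=
  ∀ m : M, IsEssentialSubmodule (LinearMap.ker (LinearMap.toSpanSingleton R M m))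

/-- Property (◇): every finitely generated left `R`-module containing an essential simple
submodule is Artinian. -/
def HasPropertyDiamond (R : Type u) [Ring R] : Prop :=
  ∀ (M : Type v) [AddCommGroup M] [Module R M], Module.Finite R M →
    (∃ S : Submodule R M, IsSimpleModule R S ∧ IsEssentialSubmodule S) → IsArtinian R M

/-- A left C-ring: every nonzero cyclic singular left module has a nonzero socle. -/
def IsLeftCRing (R : Type u) [Ring R] : Prop :=
  ∀ (M : Type v) [AddCommGroup M] [Module R M], Nontrivial M →
    (∃ m : M, Submodule.span R {m} = ⊤) → IsSingularModule R M →
    moduleSocle R M ≠ ⊥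

/-- The Dickson torsion part of a module: the sum of all its semi-Artinian submodules. -/
def dicksonTorsionPart (R : Type u) [Ring R] (A : Type v) [AddCommGroup A] [Module R A] :
    Submodule R A :=
  sSup {N : Submodule R A | IsSemiartinianModule R N}

section Socle

variable {R : Type u} [Ring R] {M : Type v} [AddCommGroup M] [Module R M]

theorem moduleSocle_eq_bot_iff :
    moduleSocle R M = ⊥ ↔ ∀ S : Submodule R M, ¬IsSimpleModule R S :=
  sSup_eq_bot.trans <| forall_congr' fun _ =>
    ⟨fun hS hsimple => (isSimpleModule_iff_isAtom.mp hsimple).ne_bot (hS hsimple),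
      fun hS hsimple => (hS hsimple).elim⟩

theorem moduleSocle_eq_bot_of_injective {N : Type w} [AddCommGroup N] [Module R N]
    {f : M →ₗ[R] N} (hf : Function.Injective f) (hN : moduleSocle R N = ⊥) :
    moduleSocle R M = ⊥ := by
  rw [moduleSocle_eq_bot_iff] at hN ⊢
  intro S hS
  exact hN (S.map f) (IsSimpleModule.congr (S.equivMapOfInjective f hf).symm)

theorem IsSemiartinianModule.eq_zero_of_moduleSocle_eq_bot (hM : IsSemiartinianModule R M)
    {F : Type w} [AddCommGroup F] [Module R F] (hF : moduleSocle R F = ⊥) (f : M →ₗ[R] F) :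
    f = 0 := by
  by_contra hf
  have hker : LinearMap.ker f ≠ ⊤ := by rwa [Ne, LinearMap.ker_eq_top]
  refine hM _ hker (moduleSocle_eq_bot_of_injective (f := (LinearMap.ker f).liftQ f le_rfl) ?_ hF)
  exact LinearMap.ker_eq_bot.mp (Submodule.ker_liftQ_eq_bot' _ _ rfl)

end Socle

/-- A module `M` is semi-Artinian iff every `R`-linear map from `M` to a module with
zero socle is zero. -/
theorem stmt0 (R : Type u) [Ring R] (M : Type v) [AddCommGroup M] [Module R M] :
    IsSemiartinianModule R M ↔
      ∀ (F : Type v) [AddCommGroup F] [Module R F],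
        moduleSocle R F = ⊥ → ∀ f : M →ₗ[R] F, f = 0 := by
  refine ⟨fun hM F _ _ hF => hM.eq_zero_of_moduleSocle_eq_bot hF, fun h N hN hsoc => hN ?_⟩
  simpa using congrArg LinearMap.ker (h _ hsoc N.mkQ)
end

section
/- Let R be a left Noetherian ring. Then R satisfies property (◇) (every finitely generated left R-module containing an essential simple submodule is Artinian) if and only if every left R-module whose socle is an essential submodule is semi-Artinian. -/
/-!
A finitely generated module over a left Noetherian ring is Noetherian, and a Noetherian
semi-Artinian module is Artinian (Noetherian induction on quotients: `M ⧸ N` is an extension of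
`M ⧸ J` by a simple submodule `J ⧸ N`). Since an essential simple submodule makes the socle
essential, this gives (◇) from the second condition.

Conversely, assume (◇). A finitely generated module `C` with essential socle is Artinian: take
`W` maximal among submodules for which some `K` has `C ⧸ K` Artinian and `K ⊓ W = ⊥`.
If `K ≠ ⊥`, it contains a simple `S`; a submodule `K' ⊇ W` maximal with `K' ⊓ S = ⊥` makes
the image of `S` an essential simple submodule of `C ⧸ K'`, so `C ⧸ K'` is Artinian by (◇), and
`K ⊓ K'` shows that `W ⊔ S` belongs to the family, contradicting maximality. Now if `M` has
essential socle and `x ∉ N`, then `R ∙ x` inherits an essential socle, so its image in `M ⧸ N`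
is a nonzero Artinian submodule and contains a simple one.
-/

universe u v w

open Submodule

section Socle

variable {R : Type u} [Ring R] {M : Type v} {N : Type w} [AddCommGroup M] [Module R M]
  [AddCommGroup N] [Module R N]

theorem le_moduleSocle {S : Submodule R M} (hS : IsSimpleModule R S) : S ≤ moduleSocle R M :=
  le_sSup hS

theorem moduleSocle_ne_bot_iff :
    moduleSocle R M ≠ ⊥ ↔ ∃ S : Submodule R M, IsSimpleModule R S := by
  refine ⟨fun h => ?_, fun ⟨S, hS⟩ h => ?_⟩
  · by_contra! hc
    exact h (sSup_eq_bot.mpr fun S hS => (hc S hS).elim)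
  · exact (isSimpleModule_iff_isAtom.mp hS).1 (eq_bot_iff.mpr (h ▸ le_moduleSocle hS))

instance : IsSemisimpleModule R (moduleSocle R M) := by
  rw [moduleSocle, sSup_eq_iSup]
  exact isSemisimpleModule_biSup_of_isSemisimpleModule_submodule
    fun S (_ : IsSimpleModule R S) => inferInstance

theorem exists_isSimpleModule_le_of_le_moduleSocle {L : Submodule R M}
    (hL : L ≤ moduleSocle R M) (hne : L ≠ ⊥) : ∃ S ≤ L, IsSimpleModule R S := by
  have := IsSemisimpleModule.of_injective (inclusion hL) (inclusion_injective hL)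
  exact (IsSemisimpleModule.eq_bot_or_exists_simple_le L).resolve_left hne

theorem isEssentialSubmodule_moduleSocle_iff :
    IsEssentialSubmodule (moduleSocle R M) ↔
      ∀ L : Submodule R M, L ≠ ⊥ → ∃ S ≤ L, IsSimpleModule R S := by
  refine ⟨fun h L hL => ?_, fun h L hL => ?_⟩
  · obtain ⟨S, hSL, hS⟩ := exists_isSimpleModule_le_of_le_moduleSocle inf_le_left (h L hL)
    exact ⟨S, hSL.trans inf_le_right, hS⟩
  · obtain ⟨S, hSL, hS⟩ := h L hL
    exact ne_bot_of_le_ne_bot (isSimpleModule_iff_isAtom.mp hS).1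
      (le_inf (le_moduleSocle hS) hSL)

theorem IsEssentialSubmodule.mono {K L : Submodule R M} (hK : IsEssentialSubmodule K)
    (hKL : K ≤ L) : IsEssentialSubmodule L :=
  fun P hP => ne_bot_of_le_ne_bot (hK P hP) (inf_le_inf_right P hKL)

theorem isSimpleModule_map_of_injective {f : M →ₗ[R] N} (hf : Function.Injective f)
    {S : Submodule R M} (hS : IsSimpleModule R S) : IsSimpleModule R (S.map f) :=
  .congr (S.equivMapOfInjective f hf).symm

theorem isEssentialSubmodule_moduleSocle_of_injective {f : N →ₗ[R] M}
    (hf : Function.Injective f) (h : IsEssentialSubmodule (moduleSocle R M)) :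
    IsEssentialSubmodule (moduleSocle R N) := by
  rw [isEssentialSubmodule_moduleSocle_iff] at h ⊢
  intro L hL
  obtain ⟨S, hSL, hS⟩ := h (L.map f)
    fun h0 => hL (map_injective_of_injective hf (h0.trans (map_bot f).symm))
  have hmap : (S.comap f).map f = S := map_comap_eq_self (hSL.trans LinearMap.map_le_range)
  refine ⟨S.comap f, (comap_mono hSL).trans (comap_map_eq_of_injective hf L).le, ?_⟩
  exact .congr (((S.comap f).equivMapOfInjective f hf).trans (LinearEquiv.ofEq _ _ hmap))

theorem moduleSocle_ne_bot_of_injective {f : M →ₗ[R] N} (hf : Function.Injective f)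
    (h : moduleSocle R M ≠ ⊥) : moduleSocle R N ≠ ⊥ := by
  obtain ⟨S, hS⟩ := moduleSocle_ne_bot_iff.mp h
  exact moduleSocle_ne_bot_iff.mpr ⟨_, isSimpleModule_map_of_injective hf hS⟩

theorem moduleSocle_ne_bot_of_isArtinian [IsArtinian R M] [Nontrivial M] :
    moduleSocle R M ≠ ⊥ := by
  obtain ⟨S, hS⟩ := IsAtomic.exists_atom (Submodule R M)
  exact moduleSocle_ne_bot_iff.mpr ⟨S, isSimpleModule_iff_isAtom.mpr hS⟩

end Socle


section Quotient

variable {R : Type u} [Ring R] {M : Type v} [AddCommGroup M] [Module R M]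

theorem isSimpleModule_map_mkQ {K S : Submodule R M} (hS : IsSimpleModule R S)
    (hKS : Disjoint K S) : IsSimpleModule R (S.map K.mkQ) := by
  have hinj : Function.Injective (K.mkQ ∘ₗ S.subtype) := by
    rw [← LinearMap.ker_eq_bot, LinearMap.ker_comp, ker_mkQ, ← disjoint_iff_comap_eq_bot]
    exact hKS.symm
  have e := LinearEquiv.ofInjective _ hinj
  rw [LinearMap.range_comp, range_subtype] at e
  exact .congr e.symm

theorem isEssentialSubmodule_map_mkQ {K S : Submodule R M} (hKS : Disjoint K S)
    (hmax : ∀ A, K < A → ¬Disjoint A S) : IsEssentialSubmodule (S.map K.mkQ) := by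
  intro L hL h
  have hlt : K < L.comap K.mkQ := by
    simpa only [comap_bot, ker_mkQ] using
      comap_strictMono_of_surjective K.mkQ_surjective (bot_lt_iff_ne_bot.mpr hL)
  refine hmax _ hlt fun P hPL hPS => hKS ?_ hPS
  have : P.map K.mkQ ≤ S.map K.mkQ ⊓ L :=
    le_inf (map_mono hPS) (map_le_iff_le_comap.mpr hPL)
  rwa [h, map_le_iff_le_comap, comap_bot, ker_mkQ] at this

theorem isArtinian_quotient_inf {K₁ K₂ : Submodule R M} [IsArtinian R (M ⧸ K₁)]
    [IsArtinian R (M ⧸ K₂)] : IsArtinian R (M ⧸ (K₁ ⊓ K₂)) := by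
  have hker : LinearMap.ker (K₁.mkQ.prod K₂.mkQ) = K₁ ⊓ K₂ := by
    rw [LinearMap.ker_prod, ker_mkQ, ker_mkQ]
  exact isArtinian_of_injective ((K₁ ⊓ K₂).liftQ _ hker.ge)
    (LinearMap.ker_eq_bot.mp (ker_liftQ_eq_bot _ _ _ hker.le))

theorem IsSemiartinianModule.isArtinian [IsNoetherian R M] (h : IsSemiartinianModule R M) :
    IsArtinian R M := by
  suffices ∀ N : Submodule R M, IsArtinian R (M ⧸ N) from
    isArtinian_of_linearEquiv (quotEquivOfEqBot ⊥ rfl)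
  refine IsNoetherian.induction fun N ih => ?_
  obtain rfl | hN := eq_or_ne N ⊤
  · infer_instance
  obtain ⟨T, hT⟩ := moduleSocle_ne_bot_iff.mp (h N hN)
  set J := T.comap N.mkQ
  have hNJ : N < J := by
    simpa only [comap_bot, ker_mkQ] using comap_strictMono_of_surjective N.mkQ_surjective
      (isSimpleModule_iff_isAtom.mp hT).bot_lt
  have := ih J hNJ
  rw [← map_comap_eq_of_surjective N.mkQ_surjective T] at hT
  exact (isArtinian_iff_submodule_quotient (J.map N.mkQ)).mpr
    ⟨inferInstance, isArtinian_of_linearEquiv (quotientQuotientEquivQuotient N J hNJ.le).symm⟩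

end Quotient

namespace HasPropertyDiamond

variable {R : Type u} [Ring R] [IsNoetherianRing R] {C : Type v} [AddCommGroup C] [Module R C]
  [Module.Finite R C]

theorem exists_isArtinian_quotient (hD : HasPropertyDiamond.{u, v} R) {W S : Submodule R C}
    (hS : IsSimpleModule R S) (hWS : Disjoint W S) :
    ∃ K, W ≤ K ∧ Disjoint K S ∧ IsArtinian R (C ⧸ K) := by
  obtain ⟨K, ⟨hWK, hKS⟩, hmax⟩ := set_has_maximal_iff_noetherian.mpr inferInstance
    {A : Submodule R C | W ≤ A ∧ Disjoint A S} ⟨W, le_rfl, hWS⟩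
  refine ⟨K, hWK, hKS, hD _ inferInstance ⟨_, isSimpleModule_map_mkQ hS hKS, ?_⟩⟩
  exact isEssentialSubmodule_map_mkQ hKS fun A hKA hAS => hmax A ⟨hWK.trans hKA.le, hAS⟩ hKA

theorem isArtinian_of_isEssentialSubmodule_moduleSocle (hD : HasPropertyDiamond.{u, v} R)
    (hC : IsEssentialSubmodule (moduleSocle R C)) : IsArtinian R C := by
  obtain ⟨W, ⟨K, hKW, hK⟩, hWmax⟩ := set_has_maximal_iff_noetherian.mpr inferInstance
    {W : Submodule R C | ∃ K, Disjoint K W ∧ IsArtinian R (C ⧸ K)}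
    ⟨⊥, ⊤, disjoint_bot_right, inferInstance⟩
  obtain rfl | hK0 := eq_or_ne K ⊥
  · exact isArtinian_of_linearEquiv (quotEquivOfEqBot ⊥ rfl)
  exfalso
  obtain ⟨S, hSK, hS⟩ := isEssentialSubmodule_moduleSocle_iff.mp hC K hK0
  have hWS : Disjoint W S := (hKW.mono_left hSK).symm
  obtain ⟨K', hWK', hK'S, hK'⟩ := hD.exists_isArtinian_quotient hS hWS
  have hW_lt : W < W ⊔ S := left_lt_sup.mpr fun hSW =>
    (isSimpleModule_iff_isAtom.mp hS).1 (hWS.eq_bot_of_ge hSW)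
  have hK'WS : (W ⊔ S) ⊓ K' = W := by
    rw [sup_inf_assoc_of_le S hWK', disjoint_iff.mp hK'S.symm, sup_bot_eq]
  refine hWmax _ ⟨K ⊓ K', ?_, isArtinian_quotient_inf⟩ hW_lt
  rw [disjoint_iff, inf_right_comm, inf_assoc, hK'WS, ← disjoint_iff]
  exact hKW

theorem isSemiartinianModule_of_isEssentialSubmodule_moduleSocle
    (hD : HasPropertyDiamond.{u, v} R) {M : Type v} [AddCommGroup M] [Module R M]
    (hM : IsEssentialSubmodule (moduleSocle R M)) : IsSemiartinianModule R M := by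
  intro N hN
  obtain ⟨x, -, hxN⟩ := SetLike.exists_of_lt (lt_top_iff_ne_top.mpr hN)
  let C := span R {x}
  have : IsArtinian R C :=
    hD.isArtinian_of_isEssentialSubmodule_moduleSocle
      (isEssentialSubmodule_moduleSocle_of_injective C.injective_subtype hM)
  let f := N.mkQ ∘ₗ C.subtype
  have : Nontrivial (LinearMap.range f) := by
    refine nontrivial_iff_ne_bot.mpr fun hf => hxN ?_
    have : f ⟨x, mem_span_singleton_self x⟩ = 0 := LinearMap.range_eq_bot.mp hf ▸ rfl
    simpa [f, Quotient.mk_eq_zero] using this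
  exact moduleSocle_ne_bot_of_injective (LinearMap.range f).injective_subtype
    moduleSocle_ne_bot_of_isArtinian

end HasPropertyDiamond

theorem hasPropertyDiamond_of_forall_isSemiartinianModule {R : Type u} [Ring R]
    [IsNoetherianRing R]
    (h : ∀ (M : Type v) [AddCommGroup M] [Module R M],
      IsEssentialSubmodule (moduleSocle R M) → IsSemiartinianModule R M) :
    HasPropertyDiamond.{u, v} R :=
  fun M _ _ _ ⟨_, hS, hSess⟩ => (h M (hSess.mono (le_moduleSocle hS))).isArtinian

/-- For a left Noetherian ring, property (◇) holds iff every module with essential socle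
is semi-Artinian. -/
theorem stmt2 (R : Type u) [Ring R] [IsNoetherianRing R] :
    HasPropertyDiamond.{u, v} R ↔
      ∀ (M : Type v) [AddCommGroup M] [Module R M],
        IsEssentialSubmodule (moduleSocle R M) → IsSemiartinianModule R M :=
  ⟨fun hD _ _ _ => hD.isSemiartinianModule_of_isEssentialSubmodule_moduleSocle,
    hasPropertyDiamond_of_forall_isSemiartinianModule⟩
end

section
/- Let R be an associative unital ring such that every nonzero cyclic singular left R-module has a nonzero socle (i.e., R is a left C-ring). Then the class of semi-Artinian left R-modules is closed under essential extensions: if M is a semi-Artinian left R-module and M is an essential submodule of a left R-module E, then E is semi-Artinian. In particular, Dickson's torsion theory on R-mod is stable. -/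
universe u v w

lemma socle_ne_bot_iff {R : Type u} [Ring R] {M : Type v} [AddCommGroup M] [Module R M] :
    moduleSocle R M ≠ ⊥ ↔ ∃ S : Submodule R M, IsSimpleModule R S := by
  constructor
  · intro h
    by_contra hc
    push_neg at hc
    apply h
    have hempty : {S : Submodule R M | IsSimpleModule R S} = ∅ := by
      ext S; simpa using hc S
    rw [moduleSocle, hempty, sSup_empty]
  · rintro ⟨S, hS⟩
    have hSle : S ≤ moduleSocle R M := le_sSup hS
    have hSne : S ≠ ⊥ := by
      haveI := hS
      haveI : Nontrivial S := IsSimpleModule.nontrivial R S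
      exact Submodule.nontrivial_iff_ne_bot.mp this
    intro hbot
    exact hSne (le_bot_iff.mp (hbot ▸ hSle))

lemma exists_simple_of_submodule {R : Type u} [Ring R] {M : Type v} [AddCommGroup M]
    [Module R M] (p : Submodule R M) (S : Submodule R p) (hS : IsSimpleModule R S) :
    ∃ T : Submodule R M, IsSimpleModule R T := by
  haveI := hS
  exact ⟨S.map p.subtype,
    IsSimpleModule.congr (Submodule.equivMapOfInjective p.subtype p.injective_subtype S).symm⟩

lemma essential_ann {R : Type u} [Ring R] {E : Type v} [AddCommGroup E] [Module R E]
    (M N : Submodule R E) (hMe : IsEssentialSubmodule M) (hMN : M ≤ N) (y : E) :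
    IsEssentialSubmodule (LinearMap.ker (LinearMap.toSpanSingleton R (E ⧸ N)
      (Submodule.Quotient.mk y))) := by
  intro L hL
  set K := LinearMap.ker (LinearMap.toSpanSingleton R (E ⧸ N) (Submodule.Quotient.mk y)) with hK
  have mem_K : ∀ r : R, r • y ∈ N → r ∈ K := by
    intro r hr
    rw [hK, LinearMap.mem_ker, LinearMap.toSpanSingleton_apply, ← Submodule.Quotient.mk_smul,
      Submodule.Quotient.mk_eq_zero]
    exact hr
  by_cases hT : L.map (LinearMap.toSpanSingleton R E y) = ⊥
  · have hLK : L ≤ K := by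
      intro r hr
      have h0 : r • y = 0 := by
        have := hT ▸ Submodule.mem_map_of_mem (f := LinearMap.toSpanSingleton R E y) hr
        simpa [LinearMap.toSpanSingleton_apply] using this
      exact mem_K r (h0 ▸ N.zero_mem)
    rw [inf_eq_right.mpr hLK]
    exact hL
  · obtain ⟨z, hz, hz0⟩ := Submodule.exists_mem_ne_zero_of_ne_bot (hMe _ hT)
    obtain ⟨r, hrL, hry⟩ := hz.2
    rw [LinearMap.toSpanSingleton_apply] at hry
    rw [Submodule.ne_bot_iff]
    refine ⟨r, ⟨mem_K r (hry ▸ hMN hz.1), hrL⟩, ?_⟩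
    rintro rfl
    exact hz0 (by rw [← hry, zero_smul])

/-- Over a left C-ring, the class of semi-Artinian modules is closed under essential
extensions: Dickson's torsion theory is stable. -/
theorem stmt12 (R : Type u) [Ring R] (hC : IsLeftCRing.{u, v} R)
    (E : Type v) [AddCommGroup E] [Module R E] (M : Submodule R E)
    (hM : IsSemiartinianModule R M) (hMe : IsEssentialSubmodule M) :
    IsSemiartinianModule R E := by
  intro N hN
  rw [socle_ne_bot_iff]
  by_cases hMN : M ≤ N
  · -- singular case: M ≤ N, so E ⧸ N is singular
    obtain ⟨x, -, hxN⟩ := SetLike.exists_of_lt (lt_top_iff_ne_top.mpr hN : N < ⊤)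
    set m : E ⧸ N := Submodule.Quotient.mk x with hmdef
    have hm : m ≠ 0 := by
      rw [hmdef, ne_eq, Submodule.Quotient.mk_eq_zero]
      exact hxN
    set C : Submodule R (E ⧸ N) := Submodule.span R {m} with hCdef
    have hmC : m ∈ C := Submodule.mem_span_singleton_self m
    haveI : Nontrivial C := ⟨⟨⟨m, hmC⟩, 0, by
      intro h
      exact hm (by simpa using congrArg Subtype.val h)⟩⟩
    have hcyc : Submodule.span R {(⟨m, hmC⟩ : C)} = ⊤ := by
      apply Submodule.map_injective_of_injective C.injective_subtype
      rw [Submodule.map_span, Submodule.map_subtype_top]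
      simp [hCdef]
    have hsing : IsSingularModule R C := by
      intro c
      obtain ⟨y, hy⟩ := Submodule.Quotient.mk_surjective N (c : E ⧸ N)
      have hker : LinearMap.ker (LinearMap.toSpanSingleton R C c)
          = LinearMap.ker (LinearMap.toSpanSingleton R (E ⧸ N) (Submodule.Quotient.mk y)) := by
        ext r
        rw [hy]
        simp only [LinearMap.mem_ker, LinearMap.toSpanSingleton_apply]
        constructor
        · intro h
          have := congrArg Subtype.val h
          simpa using this
        · intro h
          exact Subtype.ext (by simpa using h)
      rw [hker]
      exact essential_ann M N hMe hMN y
    obtain ⟨S, hS⟩ := socle_ne_bot_iff.mp (hC C inferInstance ⟨_, hcyc⟩ hsing)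
    exact exists_simple_of_submodule C S hS
  · -- M ⊄ N : the image of M in E ⧸ N is a nonzero semi-Artinian submodule
    set f : M →ₗ[R] E ⧸ N := N.mkQ.comp M.subtype with hf
    have hrange : LinearMap.range f = M.map N.mkQ := by
      rw [hf, LinearMap.range_comp, Submodule.range_subtype]
    have hrne : LinearMap.range f ≠ ⊥ := by
      rw [hrange]
      intro hb
      apply hMN
      intro x hx
      have : N.mkQ x ∈ Submodule.map N.mkQ M := Submodule.mem_map_of_mem hx
      rw [hb, Submodule.mem_bot, Submodule.mkQ_apply, Submodule.Quotient.mk_eq_zero] at this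
      exact this
    have hker : LinearMap.ker f ≠ ⊤ := by
      intro h
      exact hrne (by rw [LinearMap.range_eq_bot.mpr (LinearMap.ker_eq_top.mp h)])
    obtain ⟨S, hS⟩ := socle_ne_bot_iff.mp (hM (LinearMap.ker f) hker)
    haveI := hS
    set e := f.quotKerEquivRange with he
    have hS' : IsSimpleModule R (S.map (e : (↥M ⧸ LinearMap.ker f) →ₗ[R] LinearMap.range f)) :=
      IsSimpleModule.congr
        (Submodule.equivMapOfInjective _ e.injective S).symm
    exact exists_simple_of_submodule (LinearMap.range f) _ hS'
end

section
/- Let R be an associative unital ring such that every nonzero left R-module with zero socle contains a nonzero projective submodule (condition (P) for Dickson's torsion theory). Then R is a left C-ring: every nonzero cyclic singular left R-module has a nonzero socle. -/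
universe u v w

/-- If every nonzero module with zero socle contains a nonzero projective submodule,
then `R` is a left C-ring. -/
theorem stmt16 (R : Type u) [Ring R]
    (hP : ∀ (M : Type v) [AddCommGroup M] [Module R M], Nontrivial M →
      moduleSocle R M = ⊥ → ∃ P : Submodule R M, P ≠ ⊥ ∧ Module.Projective R P) :
    IsLeftCRing.{u, v} R := by
  intro M _ _ hM hcyc hsing hsoc
  obtain ⟨m, hm⟩ := hcyc
  obtain ⟨P, hPbot, hPproj⟩ := hP M hM hsoc
  set f := LinearMap.toSpanSingleton R M m with hfdef
  have hf : Function.Surjective f := by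
    rw [← LinearMap.range_eq_top, ← LinearMap.span_singleton_eq_range]
    exact hm
  obtain ⟨h, hh⟩ := Module.projective_lifting_property f P.subtype hf
  -- h : ↥P →ₗ[R] R with f ∘ h = P.subtype
  have hK : LinearMap.range h ≠ ⊥ := by
    obtain ⟨p, hpP, hp0⟩ := Submodule.exists_mem_ne_zero_of_ne_bot hPbot
    rw [Submodule.ne_bot_iff]
    refine ⟨h ⟨p, hpP⟩, LinearMap.mem_range_self _ _, ?_⟩
    intro h0
    apply hp0
    have : f (h ⟨p, hpP⟩) = p := by
      have := congrArg (· ⟨p, hpP⟩) hh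
      simpa using this
    rw [h0, map_zero] at this
    exact this.symm
  apply hsing m (LinearMap.range h) hK
  rw [Submodule.eq_bot_iff]
  rintro x ⟨hxker, p, rfl⟩
  have hfx : f (h p) = (p : M) := by
    have := congrArg (· p) hh
    simpa using this
  have hxker' : f (h p) = 0 := hxker
  rw [hxker'] at hfx
  have : p = 0 := Subtype.ext hfx.symm
  rw [this, map_zero]
end

section
/- Let R be a left Noetherian domain (a nontrivial ring without zero divisors) such that every nonzero cyclic singular left R-module has a nonzero socle. Then every nonzero prime two-sided ideal P of R is a maximal two-sided ideal; indeed R/P is a simple Artinian ring. -/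
/-!
Since `R` is a domain, the nonzero two-sided ideal `P` is essential as a left ideal. Every nonzero
quotient of the cyclic module `R ⧸ P` is cyclic and killed by `P`, hence singular, so by the
C-condition it has a simple submodule. A Noetherian module all of whose nonzero quotients have
nonzero socle is Artinian, so `R ⧸ P` is a left Artinian ring, and it is prime. Its Jacobson
radical is nilpotent, hence zero, so `R ⧸ P` is semisimple; and a semisimple prime ring is simple,
because the right annihilator of a nonzero two-sided ideal `I` contains a complement of `I` and
must vanish. Finally, `R ⧸ P` is simple exactly when `P` is a maximal two-sided ideal.
-/

universe u v w

namespace TwoSidedIdeal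

variable {A : Type*} [Ring A]

/-- Primeness of a two-sided ideal, without the condition `P ≠ ⊤`; thus
`(⊥ : TwoSidedIdeal A).IsPrime` says that `A` is a prime ring. -/
def IsPrime (P : TwoSidedIdeal A) : Prop :=
  ∀ I J : TwoSidedIdeal A, (∀ a ∈ I, ∀ b ∈ J, a * b ∈ P) → I ≤ P ∨ J ≤ P

theorem isSimpleRing_ringConQuotient_iff_isCoatom (P : TwoSidedIdeal A) :
    IsSimpleRing P.ringCon.Quotient ↔ IsCoatom P := by
  rw [isSimpleRing_iff, ← Set.isSimpleOrder_Ici_iff_isCoatom]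
  exact ((orderIsoRingCon.trans RingCon.correspondence.symm).trans
    (orderIsoRingCon.Ici P).symm).isSimpleOrder_iff

def ringConQuotientEquivQuotient (P : TwoSidedIdeal A) : P.ringCon.Quotient ≃+* A ⧸ P.asIdeal :=
  RingCon.congr (c := P.ringCon) (d := Ideal.Quotient.ringCon P.asIdeal) (RingEquiv.refl A) <| by
    ext x y
    rw [rel_iff]
    exact (Submodule.quotientRel_def P.asIdeal).symm

theorem IsPrime.isPrime_bot_quotient {P : TwoSidedIdeal A} (hP : P.IsPrime) :
    (⊥ : TwoSidedIdeal (A ⧸ P.asIdeal)).IsPrime := by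
  let π := Ideal.Quotient.mk P.asIdeal
  have hπ (x : A) : π x = 0 ↔ x ∈ P := Ideal.Quotient.eq_zero_iff_mem.trans mem_asIdeal
  have hle : ∀ I : TwoSidedIdeal (A ⧸ P.asIdeal), comap π I ≤ P → I ≤ ⊥ := by
    intro I hI x hx
    obtain ⟨r, rfl⟩ := Ideal.Quotient.mk_surjective x
    exact (mem_bot _).mpr ((hπ r).mpr (hI ((mem_comap π).mpr hx)))
  intro I J hIJ
  refine (hP _ _ fun a ha b hb => ?_).imp (hle I) (hle J)
  rw [← hπ, map_mul]
  exact (mem_bot _).mp (hIJ _ ((mem_comap π).mp ha) _ ((mem_comap π).mp hb))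

theorem IsPrime.eq_bot_or_eq_bot_of_mul_eq_bot (h : (⊥ : TwoSidedIdeal A).IsPrime)
    (I J : Ideal A) [I.IsTwoSided] [J.IsTwoSided] (hIJ : I * J = ⊥) : I = ⊥ ∨ J = ⊥ := by
  have hbot (K : Ideal A) [K.IsTwoSided] (hK : K.toTwoSided ≤ ⊥) : K = ⊥ :=
    eq_bot_iff.mpr fun x hx =>
      (Submodule.mem_bot A).mpr ((mem_bot _).mp (hK (Ideal.mem_toTwoSided.mpr hx)))
  refine (h I.toTwoSided J.toTwoSided fun a ha b hb => ?_).imp (hbot I) (hbot J)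
  rw [mem_bot, ← Submodule.mem_bot A, ← hIJ]
  exact Ideal.mul_mem_mul (Ideal.mem_toTwoSided.mp ha) (Ideal.mem_toTwoSided.mp hb)

theorem IsPrime.eq_bot_of_isNilpotent (h : (⊥ : TwoSidedIdeal A).IsPrime) (I : Ideal A)
    [I.IsTwoSided] (hI : IsNilpotent I) : I = ⊥ := by
  obtain ⟨n, hn⟩ := hI
  induction n with
  | zero => rw [Submodule.pow_zero, Ideal.one_eq_top] at hn; exact eq_bot_mono le_top hn
  | succ n ih =>
    rw [Submodule.pow_succ] at hn
    exact (h.eq_bot_or_eq_bot_of_mul_eq_bot _ _ hn).elim ih id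

theorem IsPrime.isSimpleRing_of_isSemisimpleRing [IsSemisimpleRing A] [Nontrivial A]
    (h : (⊥ : TwoSidedIdeal A).IsPrime) : IsSimpleRing A := by
  refine .of_eq_bot_or_eq_top fun I => ?_
  obtain ⟨C, hC⟩ := exists_isCompl I.asIdeal
  let T : TwoSidedIdeal A := .mk' {t | ∀ a ∈ I, a * t = 0} (by simp)
    (fun hx hy a ha => by rw [mul_add, hx a ha, hy a ha, add_zero])
    (fun hx a ha => by rw [mul_neg, hx a ha, neg_zero])
    (fun {x y} hy a ha => by rw [← mul_assoc, hy _ (I.mul_mem_right a x ha)])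
    (fun {x y} hx a ha => by rw [← mul_assoc, hx a ha, zero_mul])
  have mem_T (t : A) : t ∈ T ↔ ∀ a ∈ I, a * t = 0 := mem_mk' ..
  have hCT : ∀ c ∈ C, c ∈ T := fun c hc => (mem_T c).mpr fun a ha => by
    have : a * c ∈ I.asIdeal ⊓ C :=
      ⟨mem_asIdeal.mpr (I.mul_mem_right a c ha), C.smul_mem a hc⟩
    rwa [hC.inf_eq_bot, Submodule.mem_bot] at this
  refine (h I T fun a ha t ht => (mem_bot _).mpr ((mem_T t).mp ht a ha)).imp le_bot_iff.mp
    fun hT => I.eq_top (mem_asIdeal.mp ?_)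
  have hCbot : C = ⊥ :=
    eq_bot_iff.mpr fun c hc => (Submodule.mem_bot A).mpr ((mem_bot _).mp (hT (hCT c hc)))
  rw [← sup_bot_eq I.asIdeal, ← hCbot, hC.sup_eq_top]
  exact Submodule.mem_top

theorem IsPrime.isSimpleRing_of_isArtinianRing [IsArtinianRing A] [Nontrivial A]
    (h : (⊥ : TwoSidedIdeal A).IsPrime) : IsSimpleRing A :=
  have : IsSemisimpleRing A := (IsArtinian.isSemisimpleModule_iff_jacobson A A).mpr
    (h.eq_bot_of_isNilpotent _ IsSemiprimaryRing.isNilpotent)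
  h.isSimpleRing_of_isSemisimpleRing

end TwoSidedIdeal

section Module

open Submodule

variable {R : Type u} [Ring R] {M : Type v} [AddCommGroup M] [Module R M]

theorem exists_isSimpleModule_of_moduleSocle_ne_bot (h : moduleSocle R M ≠ ⊥) :
    ∃ S : Submodule R M, IsSimpleModule R S := by
  by_contra! hS
  exact h (sSup_eq_bot.mpr fun S hS' => absurd hS' (hS S))

theorem IsEssentialSubmodule.mono_s18 {N N' : Submodule R M} (h : IsEssentialSubmodule N)
    (hle : N ≤ N') : IsEssentialSubmodule N' := fun L hL hN'L =>
  h L hL (eq_bot_mono (inf_le_inf_right L hle) hN'L)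

theorem isSingularModule_of_isEssentialSubmodule_annihilator
    (h : IsEssentialSubmodule (Module.annihilator R M)) : IsSingularModule R M :=
  fun m => h.mono_s18 fun r hr => by simp [Module.mem_annihilator.mp hr m]

theorem span_singleton_mkQ_eq_top {m : M} (hm : span R {m} = ⊤) (N : Submodule R M) :
    span R {N.mkQ m} = ⊤ := by
  rw [← Set.image_singleton, span_image, hm, Submodule.map_top, range_mkQ]

theorem IsLeftCRing.isSemiartinianModule (hC : IsLeftCRing.{u, v} R)
    (hM : ∃ m : M, span R {m} = ⊤) (hess : IsEssentialSubmodule (Module.annihilator R M)) :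
    IsSemiartinianModule R M := by
  intro N hN
  obtain ⟨m, hm⟩ := hM
  have := Submodule.Quotient.nontrivial_iff.mpr hN
  exact hC (M ⧸ N) this ⟨N.mkQ m, span_singleton_mkQ_eq_top hm N⟩
    (isSingularModule_of_isEssentialSubmodule_annihilator
      (hess.mono_s18 (N.mkQ.annihilator_le_of_surjective N.mkQ_surjective)))

end Module

theorem TwoSidedIdeal.isEssentialSubmodule_asIdeal {R : Type u} [Ring R] [NoZeroDivisors R]
    {P : TwoSidedIdeal R} (hP : P ≠ ⊥) : IsEssentialSubmodule P.asIdeal := by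
  intro L hL hPL
  obtain ⟨p, hp, hp0⟩ : ∃ p ∈ P, p ≠ 0 := by
    by_contra! h
    exact hP (eq_bot_iff.mpr fun p hp => (mem_bot R).mpr (h p hp))
  obtain ⟨l, hl, hl0⟩ := (Submodule.ne_bot_iff L).mp hL
  have : p * l ∈ P.asIdeal ⊓ L :=
    ⟨mem_asIdeal.mpr (P.mul_mem_right p l hp), L.smul_mem p hl⟩
  rw [hPL, Submodule.mem_bot] at this
  exact mul_ne_zero hp0 hl0 this

/-- Over a left Noetherian C-domain, every nonzero prime two-sided ideal is a maximal
two-sided ideal, and the quotient is a simple Artinian ring. -/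
theorem stmt18 (R : Type u) [Ring R] [IsDomain R] [IsNoetherianRing R]
    (hC : IsLeftCRing.{u, u} R)
    (P : TwoSidedIdeal R) (hP0 : P ≠ ⊥) (hPtop : P ≠ ⊤)
    (hPprime : ∀ A B : TwoSidedIdeal R, (∀ a ∈ A, ∀ b ∈ B, a * b ∈ P) → A ≤ P ∨ B ≤ P) :
    IsCoatom P ∧ IsSimpleRing P.ringCon.Quotient ∧ IsArtinianRing P.ringCon.Quotient := by
  have hsemi : IsSemiartinianModule R (R ⧸ P.asIdeal) :=
    hC.isSemiartinianModule ⟨_, span_singleton_mkQ_eq_top Ideal.span_singleton_one P.asIdeal⟩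
      (by rw [Ideal.annihilator_quotient]; exact P.isEssentialSubmodule_asIdeal hP0)
  have : IsArtinianRing (R ⧸ P.asIdeal) := isArtinian_of_tower R hsemi.isArtinian
  have : Nontrivial (R ⧸ P.asIdeal) := Submodule.Quotient.nontrivial_iff.mpr fun h =>
    hPtop (P.eq_top (TwoSidedIdeal.mem_asIdeal.mp (h ▸ Submodule.mem_top)))
  have hprime : P.IsPrime := hPprime
  let e := P.ringConQuotientEquivQuotient
  have hQ : IsSimpleRing P.ringCon.Quotient :=
    .of_ringEquiv e.symm hprime.isPrime_bot_quotient.isSimpleRing_of_isArtinianRing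
  exact ⟨P.isSimpleRing_ringConQuotient_iff_isCoatom.mp hQ, hQ, e.symm.isArtinianRing⟩
end
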